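/- arXiv:2306.03628 — 2 statements merged into one kernel-verified Lean document; each statement's English description precedes it below -/
import Mathlib

section
/- Every weighted linear indexed grammar is weakly equivalent to a top-down weighted linear indexed grammar, i.e., one in which every production either pops exactly one stack symbol from the distinguished nonterminal's stack (X[∘A] → Ψ X'[∘β] Ψ') or is terminal with singleton stack (X[A] → a), and all other nonterminals on right-hand sides carry the fixed initial stack [S]. -/
/-!
Store a stack `[b₁, …, bₖ]` (top at the right) over `Option Γ` as
`none, some b₁, none, …, some bₖ, none`. Every stored stack then ends in `none`, which plays the
role of the initial symbol, so even a production that pops nothing can be made to pop exactly one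
symbol. A production `X[∘β] → Ψ X'[∘β'] Ψ'` is simulated by single pops: one step pops and re-pushes
the top `none`, a chain of `popping` states removes the encoding of `β` symbol by symbol, and a
last step pops the `none` below it and pushes `none` followed by the encoding of `β'`. The side
nonterminals `Y[γ]` are emitted frozen with stack `[none]` and thawed by a production pushing the
encoding of `γ`. Conversely, decoding stacks (drop the `none`s, append what a frozen or popping
state remembers) turns each step of the new grammar into zero or one step of the old one.
-/

open scoped BigOperators

namespace CtrlForm

/-- Sentential forms: nonterminals carrying a stack (top at the right of the
list), and terminals. -/
abbrev SForm (N T Γ : Type) := List ((N × List Γ) ⊕ T)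

/-- Productions of a (weighted) linear indexed grammar:
`rw X β Ψ X' β' Ψ'` is the production `X[∘β] → Ψ X'[∘β'] Ψ'`, where `X'` is
the distinguished child inheriting the rest of the stack, and
`term X β a` is the production `X[β] → a` with `a ∈ Σ ∪ {ε}`. -/
inductive LIGProd (N T Γ : Type) where
  | rw (X : N) (β : List Γ) (Ψ : SForm N T Γ) (X' : N) (β' : List Γ) (Ψ' : SForm N T Γ)
  | term (X : N) (β : List Γ) (a : Option T)

/-- A weighted linear indexed grammar (WLIG) over a weight type `A`. -/
structure WLIG (N T Γ A : Type) where
  prods : List (LIGProd N T Γ)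
  start : N
  initStack : List Γ
  wt : LIGProd N T Γ → A

namespace WLIG

variable {N T Γ A : Type}

/-- A single derivation step of a WLIG. -/
inductive Step (G : WLIG N T Γ A) : SForm N T Γ → SForm N T Γ → Prop where
  | rw (pre post : SForm N T Γ) (σ : List Γ) {X : N} {β : List Γ} {Ψ : SForm N T Γ}
      {X' : N} {β' : List Γ} {Ψ' : SForm N T Γ}
      (hp : LIGProd.rw X β Ψ X' β' Ψ' ∈ G.prods) :
      Step G (pre ++ [Sum.inl (X, σ ++ β)] ++ post)
        (pre ++ Ψ ++ [Sum.inl (X', σ ++ β')] ++ Ψ' ++ post)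
  | term (pre post : SForm N T Γ) {X : N} {β : List Γ} {a : Option T}
      (hp : LIGProd.term X β a ∈ G.prods) :
      Step G (pre ++ [Sum.inl (X, β)] ++ post)
        (pre ++ a.toList.map Sum.inr ++ post)

/-- The derivation relation of a WLIG. -/
def Derives (G : WLIG N T Γ A) : SForm N T Γ → SForm N T Γ → Prop :=
  Relation.ReflTransGen G.Step

/-- The string language of a WLIG (weights ignored). -/
def language (G : WLIG N T Γ A) : Set (List T) :=
  { w | G.Derives [Sum.inl (G.start, G.initStack)] (w.map Sum.inr) }

/-- Every nonterminal occurring in the sentential form `Ψ` carries the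
stack `[S]`. -/
def AuxTD (S : Γ) (Ψ : SForm N T Γ) : Prop :=
  ∀ x ∈ Ψ, ∀ Y : N, ∀ σ : List Γ, x = Sum.inl (Y, σ) → σ = [S]

/-- A WLIG is top-down if every production either pops exactly one stack
symbol from the distinguished nonterminal's stack (`X[∘A] → Ψ X'[∘β] Ψ'`)
or is terminal with singleton stack (`X[A] → a`), all auxiliary
nonterminals carry the initial stack `[S]`, and the initial stack is `[S]`. -/
def IsTopDown (G : WLIG N T Γ A) : Prop :=
  ∃ S : Γ, G.initStack = [S] ∧
    ∀ p ∈ G.prods,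
      (∃ X A' Ψ X' β Ψ', p = LIGProd.rw X [A'] Ψ X' β Ψ' ∧ AuxTD S Ψ ∧ AuxTD S Ψ') ∨
      (∃ X A' a, p = LIGProd.term X [A'] a)

end WLIG

namespace LIGProd

variable {N T Γ : Type}

def lhs : LIGProd N T Γ → N × List Γ
  | rw X β _ _ _ _ => (X, β)
  | term X β _ => (X, β)

def auxNts : LIGProd N T Γ → List (N × List Γ)
  | rw _ _ Ψ _ _ Ψ' => (Ψ ++ Ψ').filterMap Sum.getLeft?
  | term _ _ _ => []

end LIGProd

def SForm.mapNt {N T Γ N' Γ' : Type} (f : N × List Γ → N' × List Γ') :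
    SForm N T Γ → SForm N' T Γ' :=
  List.map (Sum.map f id)

namespace WLIG

variable {N T Γ A N' Γ' A' : Type} {G : WLIG N T Γ A}

theorem Step.append_context {u v : SForm N T Γ} (h : G.Step u v) (a b : SForm N T Γ) :
    G.Step (a ++ u ++ b) (a ++ v ++ b) := by
  cases h with
  | rw pre post σ hp => simpa using Step.rw (a ++ pre) (post ++ b) σ hp
  | term pre post hp => simpa using Step.term (a ++ pre) (post ++ b) hp

theorem Step.rw_singleton {X : N} {β : List Γ} {Ψ : SForm N T Γ} {X' : N} {β' : List Γ}
    {Ψ' : SForm N T Γ} (hp : LIGProd.rw X β Ψ X' β' Ψ' ∈ G.prods) (σ : List Γ) :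
    G.Step [.inl (X, σ ++ β)] (Ψ ++ [.inl (X', σ ++ β')] ++ Ψ') := by
  simpa using Step.rw [] [] σ hp

theorem Step.term_singleton {X : N} {β : List Γ} {a : Option T}
    (hp : LIGProd.term X β a ∈ G.prods) :
    G.Step [.inl (X, β)] (a.toList.map .inr) := by
  simpa using Step.term [] [] hp

theorem Step.derives {u v : SForm N T Γ} (h : G.Step u v) : G.Derives u v :=
  .single h

theorem Derives.refl (u : SForm N T Γ) : G.Derives u u :=
  Relation.ReflTransGen.refl

theorem Derives.trans {u v w : SForm N T Γ} (h : G.Derives u v) (h' : G.Derives v w) :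
    G.Derives u w :=
  Relation.ReflTransGen.trans h h'

theorem Derives.of_eq {u v : SForm N T Γ} (h : u = v) : G.Derives u v :=
  h ▸ .refl u

theorem Derives.append_context {u v : SForm N T Γ} (h : G.Derives u v) (a b : SForm N T Γ) :
    G.Derives (a ++ u ++ b) (a ++ v ++ b) :=
  Relation.ReflTransGen.lift' (fun w => a ++ w ++ b)
    (fun _ _ hs => .single (hs.append_context a b)) _ _ h

theorem Derives.append {u v u' v' : SForm N T Γ} (h : G.Derives u v) (h' : G.Derives u' v') :
    G.Derives (u ++ u') (v ++ v') := by
  have h₁ := h.append_context [] u'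
  have h₂ := h'.append_context v []
  simp only [List.nil_append, List.append_nil] at h₁ h₂
  exact h₁.trans h₂

theorem auxTD_nil {S : Γ} : AuxTD S ([] : SForm N T Γ) := by
  simp [AuxTD]

def Simulates (G : WLIG N T Γ A) (f : N' × List Γ' → N × List Γ) : LIGProd N' T Γ' → Prop
  | .rw Z β Ψ Z' β' Ψ' => ∀ σ, G.Derives [.inl (f (Z, σ ++ β))]
      (SForm.mapNt f Ψ ++ [.inl (f (Z', σ ++ β'))] ++ SForm.mapNt f Ψ')
  | .term Z β a => G.Derives [.inl (f (Z, β))] (a.toList.map .inr)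

theorem Derives.mapNt_of_simulates {H : WLIG N' T Γ' A'} {f : N' × List Γ' → N × List Γ}
    (hf : ∀ q ∈ H.prods, G.Simulates f q) {u v : SForm N' T Γ'} (h : H.Derives u v) :
    G.Derives (SForm.mapNt f u) (SForm.mapNt f v) := by
  refine Relation.ReflTransGen.lift' (SForm.mapNt f) (fun u v huv => ?_) _ _ h
  change G.Derives (SForm.mapNt f u) (SForm.mapNt f v)
  cases huv with
  | rw pre post σ hp =>
    simpa [SForm.mapNt] using
      ((hf _ hp) σ).append_context (SForm.mapNt f pre) (SForm.mapNt f post)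
  | term pre post hp =>
    simpa [SForm.mapNt, Function.comp_def] using
      (hf _ hp).append_context (SForm.mapNt f pre) (SForm.mapNt f post)

end WLIG

namespace TopDown

variable {N T Γ A : Type}

inductive Nt (N T Γ : Type)
  | live (X : N)
  | frozen (X : N) (γ : List Γ)
  | popping (p : LIGProd N T Γ) (popped : List (Option Γ))

def sep (γ : List Γ) : List (Option Γ) :=
  γ.flatMap fun b => [some b, none]

def enc (γ : List Γ) : List (Option Γ) :=
  none :: sep γ

def freeze : SForm N T Γ → SForm (Nt N T Γ) T (Option Γ) :=
  SForm.mapNt fun Yγ => (.frozen Yγ.1 Yγ.2, [none])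

def embed : SForm N T Γ → SForm (Nt N T Γ) T (Option Γ) :=
  SForm.mapNt fun Yγ => (.live Yγ.1, enc Yγ.2)

def decode : Nt N T Γ × List (Option Γ) → N × List Γ
  | (.live X, s) => (X, s.reduceOption)
  | (.frozen X γ, s) => (X, s.reduceOption ++ γ)
  | (.popping p v, s) => (p.lhs.1, (s ++ v).reduceOption)

def thaw (Yγ : N × List Γ) : LIGProd (Nt N T Γ) T (Option Γ) :=
  .rw (.frozen Yγ.1 Yγ.2) [none] [] (.live Yγ.1) (enc Yγ.2) []

def popChain (p : LIGProd N T Γ) : List (Option Γ) → List (LIGProd (Nt N T Γ) T (Option Γ))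
  | [] => []
  | c :: v => .rw (.popping p v) [c] [] (.popping p (c :: v)) [] [] :: popChain p v

def finish : LIGProd N T Γ → LIGProd (Nt N T Γ) T (Option Γ)
  | p@(.rw _ β Ψ X' β' Ψ') =>
    .rw (.popping p (sep β)) [none] (freeze Ψ) (.live X') (enc β') (freeze Ψ')
  | p@(.term _ β a) => .term (.popping p (sep β)) [none] a

def compile (p : LIGProd N T Γ) : List (LIGProd (Nt N T Γ) T (Option Γ)) :=
  .rw (.live p.lhs.1) [none] [] (.popping p []) [none] [] ::
    popChain p (sep p.lhs.2) ++ finish p :: p.auxNts.map thaw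

end TopDown

open TopDown

def WLIG.toTopDown {N T Γ A : Type} [One A] (G : WLIG N T Γ A) :
    WLIG (Nt N T Γ) T (Option Γ) A where
  prods := thaw (G.start, G.initStack) :: G.prods.flatMap compile
  start := .frozen G.start G.initStack
  initStack := [none]
  wt := fun _ => 1

namespace TopDown

variable {N T Γ A : Type}

@[simp] theorem reduceOption_sep (γ : List Γ) : (sep γ).reduceOption = γ := by
  induction γ with
  | nil => rfl
  | cons b γ ih => simpa [sep] using ih

@[simp] theorem reduceOption_enc (γ : List Γ) : (enc γ).reduceOption = γ := by
  simp [enc]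

theorem enc_append (σ β : List Γ) : enc (σ ++ β) = enc σ ++ sep β := by
  simp [enc, sep]

theorem exists_enc_eq_append_none (σ : List Γ) : ∃ τ, enc σ = τ ++ [none] := by
  induction σ using List.reverseRecOn with
  | nil => exact ⟨[], rfl⟩
  | append_singleton σ b _ => exact ⟨enc σ ++ [some b], by simp [enc_append, sep]⟩

@[simp] theorem mapNt_decode_freeze (Ψ : SForm N T Γ) : SForm.mapNt decode (freeze Ψ) = Ψ := by
  induction Ψ with
  | nil => rfl
  | cons x Ψ ih => cases x <;> simpa [freeze, SForm.mapNt, decode] using ih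

theorem mem_popChain {p : LIGProd N T Γ} {u : List (Option Γ)}
    {q : LIGProd (Nt N T Γ) T (Option Γ)} (hq : q ∈ popChain p u) :
    ∃ c v, q = .rw (.popping p v) [c] [] (.popping p (c :: v)) [] [] := by
  induction u with
  | nil => simp [popChain] at hq
  | cons c v ih =>
    rcases List.mem_cons.mp hq with rfl | hq
    · exact ⟨c, v, rfl⟩
    · exact ih hq

theorem thaw_mem_compile {p : LIGProd N T Γ} {Yγ : N × List Γ} (h : Yγ ∈ p.auxNts) :
    thaw Yγ ∈ compile p := by
  simp only [compile, List.mem_cons, List.mem_append, List.mem_map]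
  exact Or.inr (Or.inr ⟨Yγ, h, rfl⟩)

theorem auxTD_freeze (Ψ : SForm N T Γ) : WLIG.AuxTD none (freeze Ψ) := by
  simp only [WLIG.AuxTD, freeze, SForm.mapNt, List.mem_map]
  rintro _ ⟨_ | _, -, rfl⟩ _ _ h
  · cases h; rfl
  · cases h

section Soundness

variable {G : WLIG N T Γ A}

theorem simulates_finish {p : LIGProd N T Γ} (hp : p ∈ G.prods) :
    G.Simulates decode (finish p) := by
  cases p with
  | rw X β Ψ X' β' Ψ' =>
    intro σ
    simpa [finish, WLIG.Simulates, decode, LIGProd.lhs, List.reduceOption_append, enc] using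
      (WLIG.Step.rw_singleton hp σ.reduceOption).derives
  | term X β a =>
    simpa [finish, WLIG.Simulates, decode, LIGProd.lhs] using
      (WLIG.Step.term_singleton hp).derives

theorem simulates_thaw (Yγ : N × List Γ) : G.Simulates decode (thaw Yγ) :=
  fun _ => WLIG.Derives.of_eq (by simp [decode, SForm.mapNt, List.reduceOption_append])

theorem simulates_of_mem_compile {p : LIGProd N T Γ} (hp : p ∈ G.prods)
    {q : LIGProd (Nt N T Γ) T (Option Γ)} (hq : q ∈ compile p) :
    G.Simulates decode q := by
  simp only [compile, List.mem_cons, List.mem_append, List.mem_map] at hq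
  rcases hq with (rfl | hq) | rfl | ⟨Yγ, -, rfl⟩
  · exact fun σ => WLIG.Derives.of_eq (by simp [decode, SForm.mapNt])
  · obtain ⟨c, v, rfl⟩ := mem_popChain hq
    exact fun σ => WLIG.Derives.of_eq (by simp [decode, SForm.mapNt])
  · exact simulates_finish hp
  · exact simulates_thaw Yγ

end Soundness

theorem derives_popChain {p : LIGProd N T Γ} {H : WLIG (Nt N T Γ) T (Option Γ) A}
    {u : List (Option Γ)} (hu : popChain p u ⊆ H.prods) (τ : List (Option Γ)) :
    H.Derives [.inl (.popping p [], τ ++ u)] [.inl (.popping p u, τ)] := by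
  induction u generalizing τ with
  | nil => exact WLIG.Derives.of_eq (by simp)
  | cons c v ih =>
    have hc := (WLIG.Step.rw_singleton (hu (List.mem_cons_self ..)) τ).derives
    simpa using (ih (fun q hq => hu (List.mem_cons_of_mem _ hq)) (τ ++ [c])).trans hc

theorem derives_freeze {H : WLIG (Nt N T Γ) T (Option Γ) A} {Ψ : SForm N T Γ}
    (hΨ : ∀ Yγ, Sum.inl Yγ ∈ Ψ → thaw Yγ ∈ H.prods) : H.Derives (freeze Ψ) (embed Ψ) := by
  induction Ψ with
  | nil => exact .refl []
  | cons x Ψ ih =>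
    have ih := ih fun Yγ h => hΨ Yγ (List.mem_cons_of_mem _ h)
    rcases x with Yγ | t
    · have h := (WLIG.Step.rw_singleton (hΨ Yγ List.mem_cons_self) []).derives
      simpa [freeze, embed, SForm.mapNt, thaw] using h.append ih
    · simpa [freeze, embed, SForm.mapNt] using
        (WLIG.Derives.refl [.inr t]).append ih

end TopDown

namespace WLIG

variable {N T Γ A : Type} [One A] {G : WLIG N T Γ A}

theorem compile_subset_toTopDown {p : LIGProd N T Γ} (hp : p ∈ G.prods) :
    compile p ⊆ G.toTopDown.prods :=
  fun _ hq => List.mem_cons_of_mem _ (List.mem_flatMap.mpr ⟨p, hp, hq⟩)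

theorem simulates_of_mem_toTopDown {q : LIGProd (Nt N T Γ) T (Option Γ)}
    (hq : q ∈ G.toTopDown.prods) : G.Simulates decode q := by
  rcases List.mem_cons.mp hq with rfl | hq
  · exact simulates_thaw _
  · obtain ⟨p, hp, hq⟩ := List.mem_flatMap.mp hq
    exact simulates_of_mem_compile hp hq

theorem toTopDown_derives_popping {p : LIGProd N T Γ} (hp : p ∈ G.prods) (σ : List Γ) :
    G.toTopDown.Derives [.inl (.live p.lhs.1, enc (σ ++ p.lhs.2))]
      [.inl (.popping p (sep p.lhs.2), enc σ)] := by
  have hsub := compile_subset_toTopDown hp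
  obtain ⟨τ, hτ⟩ := exists_enc_eq_append_none (σ ++ p.lhs.2)
  have hentry : LIGProd.rw (.live p.lhs.1) [none] [] (.popping p []) [none] [] ∈
      G.toTopDown.prods := hsub (by simp [compile])
  have hchain := derives_popChain (p := p) (u := sep p.lhs.2)
    (fun q hq => hsub (by simp [compile, hq])) (enc σ)
  have henter : G.toTopDown.Derives [.inl (.live p.lhs.1, τ ++ [none])]
      [.inl (.popping p [], τ ++ [none])] := by
    simpa using (Step.rw_singleton hentry τ).derives
  rw [← hτ, enc_append] at henter
  rw [enc_append]
  exact henter.trans hchain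

theorem toTopDown_derives_rw {X : N} {β : List Γ} {Ψ : SForm N T Γ} {X' : N} {β' : List Γ}
    {Ψ' : SForm N T Γ} (hp : LIGProd.rw X β Ψ X' β' Ψ' ∈ G.prods) (σ : List Γ) :
    G.toTopDown.Derives [.inl (.live X, enc (σ ++ β))]
      (embed Ψ ++ [.inl (.live X', enc (σ ++ β'))] ++ embed Ψ') := by
  have hsub := compile_subset_toTopDown hp
  have hpop := toTopDown_derives_popping hp σ
  obtain ⟨τ, hτ⟩ := exists_enc_eq_append_none σ
  have hfinish : finish (.rw X β Ψ X' β' Ψ') ∈ G.toTopDown.prods := hsub (by simp [compile])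
  replace hfinish := (Step.rw_singleton hfinish τ).derives
  have hthaw : ∀ Yγ, Sum.inl Yγ ∈ Ψ ++ Ψ' → thaw Yγ ∈ G.toTopDown.prods := fun Yγ h =>
    hsub (thaw_mem_compile (List.mem_filterMap.mpr ⟨_, h, rfl⟩))
  have hΨ := derives_freeze fun Yγ h => hthaw Yγ (List.mem_append_left _ h)
  have hΨ' := derives_freeze fun Yγ h => hthaw Yγ (List.mem_append_right _ h)
  have hstack : τ ++ enc β' = enc (σ ++ β') := by rw [enc_append, hτ]; simp [enc]
  rw [← hτ, hstack] at hfinish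
  exact hpop.trans (hfinish.trans ((hΨ.append (.refl _)).append hΨ'))

theorem toTopDown_derives_term {X : N} {β : List Γ} {a : Option T}
    (hp : LIGProd.term X β a ∈ G.prods) :
    G.toTopDown.Derives [.inl (.live X, enc β)] (a.toList.map .inr) := by
  have hfinish : finish (.term X β a) ∈ G.toTopDown.prods :=
    compile_subset_toTopDown hp (by simp [compile])
  simpa [LIGProd.lhs] using
    (toTopDown_derives_popping hp []).trans (Step.term_singleton hfinish).derives

theorem Step.toTopDown {u v : SForm N T Γ} (h : G.Step u v) :
    G.toTopDown.Derives (embed u) (embed v) := by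
  cases h with
  | rw pre post σ hp =>
    simpa [embed, SForm.mapNt] using
      ((Derives.refl _).append (toTopDown_derives_rw hp σ)).append (.refl (embed post))
  | term pre post hp =>
    simpa [embed, SForm.mapNt, Function.comp_def] using
      ((Derives.refl _).append (toTopDown_derives_term hp)).append (.refl (embed post))

theorem Derives.toTopDown {u v : SForm N T Γ} (h : G.Derives u v) :
    G.toTopDown.Derives (embed u) (embed v) :=
  Relation.ReflTransGen.lift' embed (fun _ _ => Step.toTopDown) _ _ h

theorem toTopDown_isTopDown : G.toTopDown.IsTopDown := by
  refine ⟨none, rfl, fun q hq => ?_⟩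
  rcases List.mem_cons.mp hq with rfl | hq
  · exact Or.inl ⟨_, _, _, _, _, _, rfl, auxTD_nil, auxTD_nil⟩
  obtain ⟨p, -, hq⟩ := List.mem_flatMap.mp hq
  simp only [compile, List.mem_cons, List.mem_append, List.mem_map] at hq
  rcases hq with (rfl | hq) | rfl | ⟨Yγ, -, rfl⟩
  · exact Or.inl ⟨_, _, _, _, _, _, rfl, auxTD_nil, auxTD_nil⟩
  · obtain ⟨c, v, rfl⟩ := mem_popChain hq
    exact Or.inl ⟨_, _, _, _, _, _, rfl, auxTD_nil, auxTD_nil⟩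
  · cases p with
    | rw => exact Or.inl ⟨_, _, _, _, _, _, rfl, auxTD_freeze _, auxTD_freeze _⟩
    | term => exact Or.inr ⟨_, _, _, rfl⟩
  · exact Or.inl ⟨_, _, _, _, _, _, rfl, auxTD_nil, auxTD_nil⟩

theorem toTopDown_language : G.toTopDown.language = G.language := by
  ext w
  constructor
  · intro hw
    simpa [language, toTopDown, decode, SForm.mapNt, Function.comp_def] using
      Derives.mapNt_of_simulates (fun _ => simulates_of_mem_toTopDown) hw
  · intro hw
    have hthaw := (Step.rw_singleton (G := G.toTopDown) List.mem_cons_self []).derives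
    simpa [language, toTopDown, embed, SForm.mapNt, Function.comp_def] using
      hthaw.trans hw.toTopDown

end WLIG

/-- Every weighted linear indexed grammar is weakly equivalent to a
top-down weighted linear indexed grammar. -/
theorem every_wlig_weakly_equivalent_to_topDown
    {N T Γ A : Type} [Semiring A] (G : WLIG N T Γ A) :
    ∃ (N' Γ' : Type) (G' : WLIG N' T Γ' A), G'.IsTopDown ∧ G'.language = G.language :=
  ⟨_, _, G.toTopDown, G.toTopDown_isTopDown, G.toTopDown_language⟩

end CtrlForm
end

section
/- Every weighted embedded pushdown automaton is weakly equivalent to a top-down WEPDA, i.e., one whose transitions are of the forms p, X[∘A] →^{a/w} q, Ψ, Y[∘β], Ψ' (popping one symbol from the top inner stack) or p, X[A] →^{a/w} q, ε, ε, ε (popping the top inner stack entirely), with all inner stacks in Ψ, Ψ' containing only the symbol S, initial configuration (q_init, S[S]), and final configuration (q_f, ε). -/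
open scoped BigOperators

namespace CtrlForm

/-- Transitions of a weighted embedded pushdown automaton:
`repl p X β a q Ψ Y β' Ψ'` is the transition
`p, X[∘β] →^a q, Ψ, Y[∘β'], Ψ'` (replace the top `β` of the top inner
stack by `β'`, relabel `X` to `Y`, insert the inner stacks `Ψ` below and
`Ψ'` above the top inner stack), and `popT p X β a q` is the transition
`p, X[β] →^a q, ε, ε, ε` popping the entire top inner stack. -/
inductive ETrans (Q N T Γ : Type) where
  | repl (p : Q) (X : N) (β : List Γ) (a : Option T) (q : Q)
      (Ψ : List (N × List Γ)) (Y : N) (β' : List Γ) (Ψ' : List (N × List Γ))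
  | popT (p : Q) (X : N) (β : List Γ) (a : Option T) (q : Q)

/-- A weighted embedded pushdown automaton over a weight type `A`.
Configurations consist of a state and an outer stack of labeled inner
stacks (tops at the right of the lists). -/
structure WEPDA (Q N T Γ A : Type) where
  trans : List (ETrans Q N T Γ)
  wt : ETrans Q N T Γ → A
  qInit : Q
  stackInit : List (N × List Γ)
  qFin : Q
  stackFin : List (N × List Γ)

namespace WEPDA

variable {Q N T Γ A : Type}

/-- Runs of a WEPDA from a configuration to a configuration, scanning a
string; represented as data so that they carry weights. -/
inductive Run (M : WEPDA Q N T Γ A) :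
    Q × List (N × List Γ) → Q × List (N × List Γ) → List T → Type where
  | refl (c : Q × List (N × List Γ)) : Run M c c []
  | repl (Φ : List (N × List Γ)) (σ : List Γ) (p : Q) (X : N) (β : List Γ)
      (a : Option T) (q : Q) (Ψ : List (N × List Γ)) (Y : N) (β' : List Γ)
      (Ψ' : List (N × List Γ)) {c : Q × List (N × List Γ)} {w : List T}
      (ht : ETrans.repl p X β a q Ψ Y β' Ψ' ∈ M.trans)
      (r : Run M (q, Φ ++ Ψ ++ [(Y, σ ++ β')] ++ Ψ') c w) :
      Run M (p, Φ ++ [(X, σ ++ β)]) c (a.toList ++ w)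
  | popT (Φ : List (N × List Γ)) (p : Q) (X : N) (β : List Γ) (a : Option T) (q : Q)
      {c : Q × List (N × List Γ)} {w : List T}
      (ht : ETrans.popT p X β a q ∈ M.trans)
      (r : Run M (q, Φ) c w) :
      Run M (p, Φ ++ [(X, β)]) c (a.toList ++ w)

/-- The string language of a WEPDA: all strings scanned by accepting runs. -/
def language (M : WEPDA Q N T Γ A) : Set (List T) :=
  { w | Nonempty (Run M (M.qInit, M.stackInit) (M.qFin, M.stackFin) w) }

/-- A WEPDA is top-down (with distinguished stack symbol `S` and initial
inner-stack label `S₀`) if every transition pops exactly one symbol from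
the top inner stack or pops a singleton top inner stack entirely, all
auxiliary inner stacks contain only the symbol `S`, the initial
configuration is `(q_init, S₀[S])`, and the final configuration is
`(q_f, ε)`. -/
def IsTopDown (M : WEPDA Q N T Γ A) : Prop :=
  ∃ (S : Γ) (S₀ : N),
    M.stackInit = [(S₀, [S])] ∧ M.stackFin = [] ∧
    ∀ t ∈ M.trans,
      (∃ p X A' a q Ψ Y β Ψ',
        t = ETrans.repl p X [A'] a q Ψ Y β Ψ' ∧
        (∀ x ∈ Ψ, (x : N × List Γ).2 = [S]) ∧ (∀ x ∈ Ψ', (x : N × List Γ).2 = [S])) ∨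
      (∃ p X A' a q, t = ETrans.popT p X [A'] a q)

end WEPDA

/-!
A top-down automaton pops exactly one symbol per transition, so every transition of `M` is
simulated by a chain of one-symbol pops, the last of which also does the push and the insertions.
An inner stack `X[γ]` is stored as `X[⊥ γ ⊤]` with both markers `none`: the top marker gives a
transition popping the empty word a symbol to pop, and the bottom marker lets a `popT` check that
nothing but the popped word is left. Inserted inner stacks must read `[S]`, so they are stored as
`[none]` under a label recording their contents, and unpacked once they reach the top. Beforehand,
the final stack of `M` is made empty by popping it off through fresh states.

One inclusion of languages is a direct simulation. For the other, an invariant saying which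
configurations of `M` a configuration of the simulator encodes is propagated backwards along
accepting runs.
-/

theorem _root_.List.forall₂_append_singleton_left_iff {α β : Type*} {R : α → β → Prop}
    {l₁ : List α} {a : α} {l₂ : List β} :
    List.Forall₂ R (l₁ ++ [a]) l₂ ↔ ∃ l b, l₂ = l ++ [b] ∧ List.Forall₂ R l₁ l ∧ R a b := by
  rw [← List.forall₂_reverse_iff, List.reverse_append, List.reverse_singleton,
    List.singleton_append, List.forall₂_cons_left_iff]
  constructor
  · rintro ⟨b, u, hab, hu, hl₂⟩
    refine ⟨u.reverse, b, ?_, by rwa [← List.forall₂_reverse_iff, List.reverse_reverse], hab⟩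
    simpa using congrArg List.reverse hl₂
  · rintro ⟨l, b, rfl, hl, hab⟩
    exact ⟨b, l.reverse, hab, by simpa using hl, by simp⟩

theorem _root_.List.forall₂_append_singleton_right_iff {α β : Type*} {R : α → β → Prop}
    {l₁ : List α} {l₂ : List β} {b : β} :
    List.Forall₂ R l₁ (l₂ ++ [b]) ↔ ∃ l a, l₁ = l ++ [a] ∧ List.Forall₂ R l l₂ ∧ R a b := by
  rw [← List.forall₂_reverse_iff, List.reverse_append, List.reverse_singleton,
    List.singleton_append, List.forall₂_cons_right_iff]
  constructor
  · rintro ⟨a, u, hab, hu, hl₁⟩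
    refine ⟨u.reverse, a, ?_, by rwa [← List.forall₂_reverse_iff, List.reverse_reverse], hab⟩
    simpa using congrArg List.reverse hl₁
  · rintro ⟨l, a, rfl, hl, hab⟩
    exact ⟨a, l.reverse, hab, by simpa using hl, by simp⟩

theorem exists_of_append_some_eq_none_cons {α : Type*} {σs : List (Option α)} {b : α}
    {δ : List α} (h : σs ++ [some b] = none :: δ.map some) :
    ∃ δ', δ = δ' ++ [b] ∧ σs = none :: δ'.map some := by
  rcases List.eq_nil_or_concat δ with rfl | ⟨δ', b', rfl⟩
  · cases σs <;> simp at h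
  · refine ⟨δ', ?_⟩
    rw [List.concat_eq_append, List.map_append, ← List.cons_append] at h
    obtain ⟨rfl, h⟩ := List.append_singleton_inj.1 h
    simp_all

namespace ETrans

variable {Q N T Γ : Type}

def source : ETrans Q N T Γ → Q
  | repl p .. => p
  | popT p .. => p

@[simp]
def label : ETrans Q N T Γ → N
  | repl _ X .. => X
  | popT _ X .. => X

def popped : ETrans Q N T Γ → List Γ
  | repl _ _ β .. => β
  | popT _ _ β .. => β

def inserted : ETrans Q N T Γ → List (N × List Γ)
  | repl _ _ _ _ _ Ψ _ _ Ψ' => Ψ ++ Ψ'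
  | popT .. => []

def mapState {Q' : Type} (f : Q → Q') : ETrans Q N T Γ → ETrans Q' N T Γ
  | repl p X β a q Ψ Y β' Ψ' => repl (f p) X β a (f q) Ψ Y β' Ψ'
  | popT p X β a q => popT (f p) X β a (f q)

def BackwardClosed (G : Q × List (N × List Γ) → List T → Prop) : ETrans Q N T Γ → Prop
  | repl p X β a q Ψ Y β' Ψ' => ∀ Φ σ w,
      G (q, Φ ++ Ψ ++ [(Y, σ ++ β')] ++ Ψ') w → G (p, Φ ++ [(X, σ ++ β)]) (a.toList ++ w)
  | popT p X β a q => ∀ Φ w, G (q, Φ) w → G (p, Φ ++ [(X, β)]) (a.toList ++ w)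

def IsTopDown (S : Γ) (t : ETrans Q N T Γ) : Prop :=
  (∃ p X A' a q Ψ Y β Ψ', t = repl p X [A'] a q Ψ Y β Ψ' ∧
      (∀ x ∈ Ψ, (x : N × List Γ).2 = [S]) ∧ (∀ x ∈ Ψ', (x : N × List Γ).2 = [S])) ∨
    (∃ p X A' a q, t = popT p X [A'] a q)

theorem isTopDown_repl {S : Γ} {p X A' a q Ψ Y β Ψ'}
    (hΨ : ∀ x ∈ Ψ, (x : N × List Γ).2 = [S]) (hΨ' : ∀ x ∈ Ψ', (x : N × List Γ).2 = [S]) :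
    (repl p X [A'] a q Ψ Y β Ψ' : ETrans Q N T Γ).IsTopDown S :=
  .inl ⟨_, _, _, _, _, _, _, _, _, rfl, hΨ, hΨ'⟩

theorem isTopDown_popT {S : Γ} {p X A' a q} :
    (popT p X [A'] a q : ETrans Q N T Γ).IsTopDown S :=
  .inr ⟨_, _, _, _, _, rfl⟩

end ETrans

namespace WEPDA

variable {Q N T Γ A : Type}

abbrev Reaches (M : WEPDA Q N T Γ A) (c d : Q × List (N × List Γ)) (w : List T) : Prop :=
  Nonempty (M.Run c d w)

abbrev Accepts (M : WEPDA Q N T Γ A) (c : Q × List (N × List Γ)) (w : List T) : Prop :=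
  M.Reaches c (M.qFin, M.stackFin) w

section Reaches

variable {M : WEPDA Q N T Γ A}

theorem Reaches.refl (c : Q × List (N × List Γ)) : M.Reaches c c [] := ⟨.refl c⟩

theorem Reaches.repl {Φ σ p X β a q Ψ Y β' Ψ' c w}
    (ht : ETrans.repl p X β a q Ψ Y β' Ψ' ∈ M.trans)
    (h : M.Reaches (q, Φ ++ Ψ ++ [(Y, σ ++ β')] ++ Ψ') c w) :
    M.Reaches (p, Φ ++ [(X, σ ++ β)]) c (a.toList ++ w) :=
  h.map (.repl _ _ _ _ _ _ _ _ _ _ _ ht)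

theorem Reaches.popT {Φ p X β a q c w} (ht : ETrans.popT p X β a q ∈ M.trans)
    (h : M.Reaches (q, Φ) c w) : M.Reaches (p, Φ ++ [(X, β)]) c (a.toList ++ w) :=
  h.map (.popT _ _ _ _ _ _ ht)

theorem Reaches.trans {c d e w w'} (h₁ : M.Reaches c d w) (h₂ : M.Reaches d e w') :
    M.Reaches c e (w ++ w') := by
  obtain ⟨r⟩ := h₁
  induction r with
  | refl => simpa using h₂
  | repl _ _ _ _ _ _ _ _ _ _ _ ht _ ih => simpa using (ih h₂).repl ht
  | popT _ _ _ _ _ _ ht _ ih => simpa using (ih h₂).popT ht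

theorem Reaches.backward_induction {G : Q × List (N × List Γ) → List T → Prop}
    (hG : ∀ t ∈ M.trans, t.BackwardClosed G) {c d w} (h : M.Reaches c d w) (hd : G d []) :
    G c w := by
  obtain ⟨r⟩ := h
  induction r with
  | refl => exact hd
  | repl Φ σ _ _ _ _ _ _ _ _ _ ht _ ih => exact hG _ ht Φ σ _ (ih hd)
  | popT Φ _ _ _ _ _ ht _ ih => exact hG _ ht Φ _ (ih hd)

end Reaches

section EmptyFinal

variable (M : WEPDA Q N T Γ A)

/-- The state in which `M.withEmptyFinal` has popped the final stack down to
`M.stackFin.take i`. -/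
def cleanupState (i : ℕ) : Q ⊕ ℕ :=
  if i = M.stackFin.length then .inl M.qFin else .inr i

def cleanupTrans (k : Fin M.stackFin.length) : ETrans (Q ⊕ ℕ) N T Γ :=
  .popT (M.cleanupState (k + 1)) M.stackFin[k].1 M.stackFin[k].2 none (M.cleanupState k)

def withEmptyFinal [One A] : WEPDA (Q ⊕ ℕ) N T Γ A where
  trans := M.trans.map (ETrans.mapState .inl) ++ (List.finRange _).map M.cleanupTrans
  wt _ := 1
  qInit := .inl M.qInit
  stackInit := M.stackInit
  qFin := M.cleanupState 0
  stackFin := []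

def CleanupInv : (Q ⊕ ℕ) × List (N × List Γ) → List T → Prop
  | (.inl p, Φ), w => M.Accepts (p, Φ) w
  | (.inr k, Φ), w => w = [] ∧ Φ = M.stackFin.take k

theorem cleanupInv_take (i : ℕ) :
    M.CleanupInv (M.cleanupState i, M.stackFin.take i) [] := by
  unfold cleanupState
  split_ifs with h
  · subst h
    simpa [CleanupInv] using Reaches.refl (M := M) _
  · exact ⟨rfl, rfl⟩

theorem backwardClosed_cleanupInv [One A] :
    ∀ t ∈ M.withEmptyFinal.trans, t.BackwardClosed M.CleanupInv := by
  intro t ht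
  rcases List.mem_append.1 ht with ht | ht
  · obtain ⟨t, htM, rfl⟩ := List.mem_map.1 ht
    cases t with
    | repl => exact fun _ _ _ h => h.repl htM
    | popT => exact fun _ _ h => h.popT htM
  · obtain ⟨k, -, rfl⟩ := List.mem_map.1 ht
    intro Φ w h
    rw [cleanupState, if_neg k.isLt.ne] at h
    obtain ⟨rfl, rfl⟩ := h
    simpa only [Fin.getElem_fin, Option.toList_none, List.nil_append,
      ← List.take_succ_eq_append_getElem k.isLt] using M.cleanupInv_take (k + 1)

theorem reaches_withEmptyFinal_of_run [One A] {c d w} (r : M.Run c d w) :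
    M.withEmptyFinal.Reaches (.inl c.1, c.2) (.inl d.1, d.2) w := by
  induction r with
  | refl => exact .refl _
  | repl _ _ _ _ _ _ _ _ _ _ _ ht _ ih =>
    exact ih.repl (List.mem_append_left _ (List.mem_map_of_mem (f := ETrans.mapState Sum.inl) ht))
  | popT _ _ _ _ _ _ ht _ ih =>
    exact ih.popT (List.mem_append_left _ (List.mem_map_of_mem (f := ETrans.mapState Sum.inl) ht))

theorem reaches_cleanup [One A] (i : ℕ) (hi : i ≤ M.stackFin.length) :
    M.withEmptyFinal.Reaches (M.cleanupState i, M.stackFin.take i) (M.cleanupState 0, []) [] := by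
  induction i with
  | zero => exact .refl _
  | succ k ih =>
    have hk : k < M.stackFin.length := hi
    have ht : M.cleanupTrans ⟨k, hk⟩ ∈ M.withEmptyFinal.trans :=
      List.mem_append_right _ (List.mem_map_of_mem (List.mem_finRange _))
    rw [List.take_succ_eq_append_getElem hk]
    exact (ih hk.le).popT ht

theorem language_withEmptyFinal [One A] : M.withEmptyFinal.language = M.language := by
  ext w
  constructor
  · intro h
    exact Reaches.backward_induction M.backwardClosed_cleanupInv h (M.cleanupInv_take 0)
  · rintro ⟨r⟩
    have hc := M.reaches_cleanup _ le_rfl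
    rw [List.take_length, cleanupState, if_pos rfl] at hc
    have h := (M.reaches_withEmptyFinal_of_run r).trans hc
    rwa [List.append_nil] at h

end EmptyFinal

end WEPDA

inductive TopDownState (Q N T Γ : Type) where
  | start
  | sim (p : Q)
  /-- simulating `t`, with the symbols `l` (top first) still to be popped -/
  | popping (t : ETrans Q N T Γ) (l : List Γ)

inductive TopDownLabel (N Γ : Type) where
  | start
  | active (X : N)
  | lazy (X : N) (γ : List Γ)

abbrev TopDownTrans (Q N T Γ : Type) :=
  ETrans (TopDownState Q N T Γ) (TopDownLabel N Γ) T (Option Γ)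

section TopDown

variable {Q N T Γ A : Type}

def activeStack (s : N × List Γ) : TopDownLabel N Γ × List (Option Γ) :=
  (.active s.1, none :: (s.2.map some ++ [none]))

def lazyStack (s : N × List Γ) : TopDownLabel N Γ × List (Option Γ) :=
  (.lazy s.1 s.2, [none])

def popChain (t : ETrans Q N T Γ)
    (last : TopDownState Q N T Γ → Option Γ → TopDownTrans Q N T Γ) :
    TopDownState Q N T Γ → Option Γ → List Γ → List (TopDownTrans Q N T Γ)
  | src, x, [] => [last src x]
  | src, x, b :: l =>
    .repl src (.active t.label) [x] none (.popping t (b :: l)) [] (.active t.label) [] [] ::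
      popChain t last (.popping t (b :: l)) (some b) l

def simulate : ETrans Q N T Γ → List (TopDownTrans Q N T Γ)
  | t@(.repl p X β a q Ψ Y β' Ψ') =>
    popChain t (fun src x => .repl src (.active X) [x] a (.sim q) (Ψ.map lazyStack) (.active Y)
      (β'.map some ++ [none]) (Ψ'.map lazyStack)) (.sim p) none β.reverse
  | t@(.popT p X β a q) =>
    .popT (.popping t []) (.active X) [none] a (.sim q) ::
      popChain t (fun src x => .repl src (.active X) [x] none (.popping t []) [] (.active X) [] [])
        (.sim p) none β.reverse

def unpack (p : Q) (s : N × List Γ) : TopDownTrans Q N T Γ :=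
  .repl (.sim p) (.lazy s.1 s.2) [none] none (.sim p) [] (.active s.1)
    (none :: (s.2.map some ++ [none])) []

def initTrans (q : Q) (L : List (N × List Γ)) : TopDownTrans Q N T Γ :=
  match L.getLast? with
  | none => .popT .start .start [none] none (.sim q)
  | some s => .repl .start .start [none] none (.sim q) (L.dropLast.map lazyStack) (.lazy s.1 s.2)
      [none] []

theorem snd_eq_of_mem_map_lazyStack {Ψ : List (N × List Γ)} :
    ∀ y ∈ Ψ.map lazyStack, (y : TopDownLabel N Γ × List (Option Γ)).2 = [none] := by
  intro y hy
  obtain ⟨s, -, rfl⟩ := List.mem_map.1 hy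
  rfl

theorem map_lazyStack_eq_of_getLast? {L : List (N × List Γ)} {s : N × List Γ}
    (h : L.getLast? = some s) : L.map lazyStack = L.dropLast.map lazyStack ++ [lazyStack s] := by
  conv_lhs => rw [← List.dropLast_append_getLast? s h]
  simp

theorem isTopDown_popChain {t : ETrans Q N T Γ}
    {last : TopDownState Q N T Γ → Option Γ → TopDownTrans Q N T Γ}
    (hlast : ∀ src x, (last src x).IsTopDown none) :
    ∀ {src x l}, ∀ tr ∈ popChain t last src x l, tr.IsTopDown none := by
  intro src x l
  induction l generalizing src x with
  | nil => simpa [popChain] using hlast src x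
  | cons b l ih =>
    intro tr htr
    rcases List.mem_cons.1 htr with rfl | htr
    · exact ETrans.isTopDown_repl (by simp) (by simp)
    · exact ih tr htr

theorem isTopDown_simulate (t : ETrans Q N T Γ) : ∀ tr ∈ simulate t, tr.IsTopDown none := by
  cases t with
  | repl =>
    exact isTopDown_popChain fun _ _ =>
      ETrans.isTopDown_repl snd_eq_of_mem_map_lazyStack snd_eq_of_mem_map_lazyStack
  | popT =>
    intro tr htr
    rcases List.mem_cons.1 htr with rfl | htr
    · exact ETrans.isTopDown_popT
    · exact isTopDown_popChain (fun _ _ => ETrans.isTopDown_repl (by simp) (by simp)) tr htr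

namespace WEPDA

theorem reaches_popChain {M : WEPDA (TopDownState Q N T Γ) (TopDownLabel N Γ) T (Option Γ) A}
    {t : ETrans Q N T Γ} {last : TopDownState Q N T Γ → Option Γ → TopDownTrans Q N T Γ}
    {Φs ρ e w}
    (hlast : ∀ src x, last src x ∈ M.trans →
      M.Reaches (src, Φs ++ [(.active t.label, ρ ++ [x])]) e w) :
    ∀ {src x l}, (∀ tr ∈ popChain t last src x l, tr ∈ M.trans) →
      M.Reaches (src, Φs ++ [(.active t.label, ρ ++ l.reverse.map some ++ [x])]) e w := by
  intro src x l
  induction l generalizing src x with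
  | nil => exact fun h => by simpa using hlast src x (h _ List.mem_cons_self)
  | cons b l ih =>
    intro h
    have hrest := ih fun tr htr => h tr (List.mem_cons_of_mem _ htr)
    simpa using Reaches.repl (Φ := Φs) (σ := ρ ++ l.reverse.map some ++ [some b]) (c := e)
      (w := w) (h _ List.mem_cons_self) (by simpa using hrest)

variable (M : WEPDA Q N T Γ A)

def lazySet : List (N × List Γ) := M.stackInit ++ M.trans.flatMap ETrans.inserted

def topDown [One A] : WEPDA (TopDownState Q N T Γ) (TopDownLabel N Γ) T (Option Γ) A where
  trans := initTrans M.qInit M.stackInit ::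
    (M.trans.flatMap simulate ++ M.trans.flatMap fun t => M.lazySet.map (unpack t.source))
  wt _ := 1
  qInit := .start
  stackInit := [(.start, [none])]
  qFin := .sim M.qFin
  stackFin := []

def Encodes (s : N × List Γ) (y : TopDownLabel N Γ × List (Option Γ)) : Prop :=
  y = activeStack s ∨ s ∈ M.lazySet ∧ y = lazyStack s

def Completes : ETrans Q N T Γ → List (N × List Γ) → List Γ → List T → Prop
  | .repl _ _ _ a q Ψ Y β' Ψ', Φ, σ, w =>
    ∃ w', w = a.toList ++ w' ∧ M.Accepts (q, Φ ++ Ψ ++ [(Y, σ ++ β')] ++ Ψ') w'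
  | .popT _ _ _ a q, Φ, σ, w => σ = [] ∧ ∃ w', w = a.toList ++ w' ∧ M.Accepts (q, Φ) w'

/-- That `δ` ends with `l` is concluded, not assumed: the chain of pops for `t` only goes on if it
does. -/
def Pending (t : ETrans Q N T Γ) (l : List Γ)
    (st : List (TopDownLabel N Γ × List (Option Γ))) (w : List T) : Prop :=
  ∀ Φ Φ' δ, List.Forall₂ M.Encodes Φ Φ' → st = Φ' ++ [(.active t.label, none :: δ.map some)] →
    ∃ σ, δ = σ ++ l.reverse ∧ M.Completes t Φ σ w

def SimInv : TopDownState Q N T Γ × List (TopDownLabel N Γ × List (Option Γ)) → List T → Prop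
  | (.start, st), w => st = [(.start, [none])] → M.Accepts (M.qInit, M.stackInit) w
  | (.sim p, st), w => ∀ Φ, List.Forall₂ M.Encodes Φ st → M.Accepts (p, Φ) w
  | (.popping t l, st), w => M.Pending t l st w

def EntersPending (t : ETrans Q N T Γ) (src : TopDownState Q N T Γ) (x : Option Γ)
    (l : List Γ) : Prop :=
  ∀ Φs σs w, M.Pending t l (Φs ++ [(.active t.label, σs)]) w →
    M.SimInv (src, Φs ++ [(.active t.label, σs ++ [x])]) w

variable {M}

section Transitions

variable [One A]

theorem initTrans_mem_topDown : initTrans M.qInit M.stackInit ∈ M.topDown.trans :=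
  List.mem_cons_self

theorem mem_topDown_of_mem_simulate {t : ETrans Q N T Γ} (ht : t ∈ M.trans)
    {tr : TopDownTrans Q N T Γ} (h : tr ∈ simulate t) : tr ∈ M.topDown.trans :=
  List.mem_cons_of_mem _ (List.mem_append_left _ (List.mem_flatMap.2 ⟨t, ht, h⟩))

theorem unpack_mem_topDown {t : ETrans Q N T Γ} (ht : t ∈ M.trans) {s : N × List Γ}
    (hs : s ∈ M.lazySet) : unpack t.source s ∈ M.topDown.trans :=
  List.mem_cons_of_mem _ (List.mem_append_right _
    (List.mem_flatMap.2 ⟨t, ht, List.mem_map_of_mem hs⟩))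

theorem forall_mem_topDown_trans {P : TopDownTrans Q N T Γ → Prop}
    (hinit : P (initTrans M.qInit M.stackInit))
    (hsim : ∀ t ∈ M.trans, ∀ tr ∈ simulate t, P tr)
    (hunpack : ∀ t ∈ M.trans, ∀ s ∈ M.lazySet, P (unpack t.source s)) :
    ∀ tr ∈ M.topDown.trans, P tr := by
  intro tr htr
  simp only [topDown, List.mem_cons, List.mem_append, List.mem_flatMap, List.mem_map] at htr
  rcases htr with rfl | ⟨t, ht, htr⟩ | ⟨t, ht, s, hs, rfl⟩
  exacts [hinit, hsim t ht tr htr, hunpack t ht s hs]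

theorem topDown_isTopDown : M.topDown.IsTopDown := by
  refine ⟨none, .start, rfl, rfl, forall_mem_topDown_trans ?_ ?_ ?_⟩
  · unfold initTrans
    split
    · exact ETrans.isTopDown_popT
    · exact ETrans.isTopDown_repl snd_eq_of_mem_map_lazyStack (by simp)
  · exact fun t _ => isTopDown_simulate t
  · exact fun _ _ _ _ => ETrans.isTopDown_repl (by simp) (by simp)

end Transitions

theorem encodes_active_iff {s : N × List Γ} {X : N} {ρ : List (Option Γ)} :
    M.Encodes s (.active X, ρ) ↔ s.1 = X ∧ ρ = none :: (s.2.map some ++ [none]) := by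
  simp [Encodes, activeStack, lazyStack, eq_comm]

theorem encodes_lazy {s : N × List Γ} {X : N} {γ : List Γ} {ρ : List (Option Γ)}
    (h : M.Encodes s (.lazy X γ, ρ)) : s = (X, γ) ∧ ρ = [none] := by
  rcases h with h | ⟨-, h⟩ <;> simp only [activeStack, lazyStack, Prod.mk.injEq] at h
  · exact absurd h.1 (by simp)
  · simp at h
    exact ⟨Prod.ext h.1.1.symm h.1.2.symm, h.2⟩

theorem forall₂_encodes_map_lazyStack {Ψ : List (N × List Γ)} (h : ∀ s ∈ Ψ, s ∈ M.lazySet) :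
    List.Forall₂ M.Encodes Ψ (Ψ.map lazyStack) :=
  List.forall₂_map_right_iff.2 (List.forall₂_same.2 fun s hs => .inr ⟨h s hs, rfl⟩)

theorem forall₂_encodes_repl {p X β a q Ψ Y β' Ψ'}
    (ht : ETrans.repl p X β a q Ψ Y β' Ψ' ∈ M.trans) {Φ Φ'}
    (h : List.Forall₂ M.Encodes Φ Φ') (γ : List Γ) :
    List.Forall₂ M.Encodes (Φ ++ Ψ ++ [(Y, γ)] ++ Ψ')
      (Φ' ++ Ψ.map lazyStack ++ [activeStack (Y, γ)] ++ Ψ'.map lazyStack) := by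
  have hins : ∀ s ∈ Ψ ++ Ψ', s ∈ M.lazySet :=
    fun s hs => List.mem_append_right _ (List.mem_flatMap.2 ⟨_, ht, hs⟩)
  refine List.rel_append (List.rel_append (List.rel_append h ?_) (.cons (.inl rfl) .nil)) ?_ <;>
    exact forall₂_encodes_map_lazyStack fun s hs => hins s (by simp [hs])

theorem accepts_of_completes {t : ETrans Q N T Γ} (ht : t ∈ M.trans) {Φ σ w}
    (h : M.Completes t Φ σ w) : M.Accepts (t.source, Φ ++ [(t.label, σ ++ t.popped)]) w := by
  cases t with
  | repl =>
    obtain ⟨w', rfl, h⟩ := h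
    exact h.repl ht
  | popT =>
    obtain ⟨rfl, w', rfl, h⟩ := h
    exact h.popT ht

theorem Pending.cons {t : ETrans Q N T Γ} {l Φs σs w} {b : Γ}
    (h : M.Pending t l (Φs ++ [(.active t.label, σs)]) w) :
    M.Pending t (b :: l) (Φs ++ [(.active t.label, σs ++ [some b])]) w := by
  intro Φ Φ' δ hΦ hst
  obtain ⟨rfl, hσ⟩ := List.append_singleton_inj.1 hst
  obtain ⟨δ', rfl, rfl⟩ := exists_of_append_some_eq_none_cons (Prod.ext_iff.1 hσ).2
  obtain ⟨σ, rfl, hc⟩ := h Φ Φs δ' hΦ rfl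
  exact ⟨σ, by simp, hc⟩

theorem entersPending_popping (t : ETrans Q N T Γ) (b : Γ) (l : List Γ) :
    M.EntersPending t (.popping t (b :: l)) (some b) l :=
  fun _ _ _ => Pending.cons

theorem entersPending_sim {t : ETrans Q N T Γ} (ht : t ∈ M.trans) :
    M.EntersPending t (.sim t.source) none t.popped.reverse := by
  intro Φs σs w h Φ hΦ
  obtain ⟨Φ₀, ⟨X, γ⟩, rfl, h₀, hs⟩ := List.forall₂_append_singleton_right_iff.1 hΦ
  obtain ⟨rfl, hρ⟩ := encodes_active_iff.1 hs
  rw [← List.cons_append, List.append_singleton_inj] at hρ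
  obtain ⟨σ, rfl, hc⟩ := h Φ₀ Φs γ h₀ (by rw [hρ.1])
  simpa using accepts_of_completes ht hc

theorem backwardClosed_popChain {t : ETrans Q N T Γ}
    {last : TopDownState Q N T Γ → Option Γ → TopDownTrans Q N T Γ}
    (hlast : ∀ src x, M.EntersPending t src x [] → (last src x).BackwardClosed M.SimInv) :
    ∀ {src x l}, M.EntersPending t src x l →
      ∀ tr ∈ popChain t last src x l, tr.BackwardClosed M.SimInv := by
  intro src x l
  induction l generalizing src x with
  | nil =>
    intro h tr htr
    rw [popChain, List.mem_singleton] at htr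
    exact htr ▸ hlast src x h
  | cons b l ih =>
    intro h tr htr
    rcases List.mem_cons.1 htr with rfl | htr
    · intro Φs σs w hw
      simp only [List.append_nil] at hw
      exact h Φs σs w hw
    · exact ih (entersPending_popping t b l) tr htr

theorem backwardClosed_simulate {t : ETrans Q N T Γ} (ht : t ∈ M.trans) :
    ∀ tr ∈ simulate t, tr.BackwardClosed M.SimInv := by
  cases t with
  | repl p X β a q Ψ Y β' Ψ' =>
    refine backwardClosed_popChain ?_ (entersPending_sim ht)
    intro src x hsrc Φs σs w hw
    apply hsrc
    intro Φ Φ' δ hΦ hst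
    obtain ⟨rfl, hσ⟩ := List.append_singleton_inj.1 hst
    obtain rfl : σs = _ := (Prod.ext_iff.1 hσ).2
    refine ⟨δ, by simp, w, rfl, hw _ ?_⟩
    simpa [activeStack] using forall₂_encodes_repl ht hΦ (δ ++ β')
  | popT p X β a q =>
    intro tr htr
    rcases List.mem_cons.1 htr with rfl | htr
    · intro Φs w hw Φ Φ' δ hΦ hst
      obtain ⟨rfl, hσ⟩ := List.append_singleton_inj.1 hst
      obtain rfl : δ = [] := by simpa using (Prod.ext_iff.1 hσ).2
      exact ⟨[], rfl, rfl, w, rfl, hw Φ hΦ⟩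
    · refine backwardClosed_popChain ?_ (entersPending_sim ht) tr htr
      intro src x hsrc Φs σs w hw
      simp only [List.append_nil] at hw
      exact hsrc Φs σs w hw

theorem backwardClosed_unpack (p : Q) (s : N × List Γ) :
    (unpack p s).BackwardClosed M.SimInv := by
  intro Φs σs w hw Φ hΦ
  obtain ⟨Φ₀, s', rfl, h₀, hs'⟩ := List.forall₂_append_singleton_right_iff.1 hΦ
  obtain ⟨rfl, hσ⟩ := encodes_lazy hs'
  obtain rfl : σs = [] := by simpa using hσ
  have hΦ' : List.Forall₂ M.Encodes (Φ₀ ++ [(s.1, s.2)]) (Φs ++ [activeStack (s.1, s.2)]) :=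
    List.rel_append h₀ (.cons (.inl rfl) .nil)
  simpa using hw _ (by simpa [activeStack] using hΦ')

theorem backwardClosed_initTrans :
    (initTrans M.qInit M.stackInit).BackwardClosed M.SimInv := by
  unfold initTrans
  split
  next hL =>
    intro Φs w hw hst
    obtain rfl : Φs = [] := by simpa using hst
    simpa [List.getLast?_eq_none_iff.1 hL] using hw [] .nil
  next s hL =>
    intro Φs σs w hw hst
    obtain ⟨rfl, hσ⟩ := List.append_singleton_inj.1 (hst.trans (List.nil_append _).symm)
    obtain rfl : σs = [] := by simpa using hσ
    have h := forall₂_encodes_map_lazyStack (M := M) fun s hs => List.mem_append_left _ hs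
    rw [map_lazyStack_eq_of_getLast? hL] at h
    exact hw M.stackInit (by simp only [List.nil_append, List.append_nil]; exact h)

theorem backwardClosed_topDown [One A] :
    ∀ tr ∈ M.topDown.trans, tr.BackwardClosed M.SimInv :=
  forall_mem_topDown_trans backwardClosed_initTrans (fun _ ht => backwardClosed_simulate ht)
    fun _ _ _ _ => backwardClosed_unpack _ _

theorem simInv_final (hfin : M.stackFin = []) : M.SimInv (.sim M.qFin, []) [] := by
  intro Φ hΦ
  rw [List.forall₂_nil_right_iff.1 hΦ, ← hfin]
  exact .refl _

section Forward

variable [One A]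

theorem reaches_simulate_repl {p X β a q Ψ Y β' Ψ'}
    (ht : ETrans.repl p X β a q Ψ Y β' Ψ' ∈ M.trans) (Φ' : List _) (σ : List Γ) :
    M.topDown.Reaches (.sim p, Φ' ++ [activeStack (X, σ ++ β)])
      (.sim q, Φ' ++ Ψ.map lazyStack ++ [activeStack (Y, σ ++ β')] ++ Ψ'.map lazyStack)
      a.toList := by
  have h := reaches_popChain (M := M.topDown) (t := .repl p X β a q Ψ Y β' Ψ') (Φs := Φ')
    (ρ := none :: σ.map some) (src := .sim p) (x := none) (l := β.reverse) (w := a.toList)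
    (e := (.sim q, Φ' ++ Ψ.map lazyStack ++ [activeStack (Y, σ ++ β')] ++ Ψ'.map lazyStack))
    (fun _ _ hmem => by
      simpa [activeStack] using (Reaches.refl _).repl (Φ := Φ') (σ := none :: σ.map some) hmem)
    (fun _ htr => mem_topDown_of_mem_simulate ht htr)
  simpa [activeStack] using h

theorem reaches_simulate_popT {p X β a q} (ht : ETrans.popT p X β a q ∈ M.trans)
    (Φ' : List _) :
    M.topDown.Reaches (.sim p, Φ' ++ [activeStack (X, β)]) (.sim q, Φ') a.toList := by
  have hpop : ETrans.popT (.popping (.popT p X β a q) []) (.active X) [none] a (.sim q) ∈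
      M.topDown.trans := mem_topDown_of_mem_simulate ht List.mem_cons_self
  have h := reaches_popChain (M := M.topDown) (t := .popT p X β a q) (Φs := Φ') (ρ := [none])
    (src := .sim p) (x := none) (l := β.reverse) (e := (.sim q, Φ')) (w := a.toList)
    (fun _ _ hmem => by
      simpa using Reaches.repl (Φ := Φ') (σ := [none]) hmem
        (by simpa using (Reaches.refl _).popT hpop))
    (fun _ htr => mem_topDown_of_mem_simulate ht (List.mem_cons_of_mem _ htr))
  simpa [activeStack] using h

theorem reaches_of_encodes {t : ETrans Q N T Γ} (ht : t ∈ M.trans) {s y Φ' e w}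
    (hs : M.Encodes s y) (h : M.topDown.Reaches (.sim t.source, Φ' ++ [activeStack s]) e w) :
    M.topDown.Reaches (.sim t.source, Φ' ++ [y]) e w := by
  rcases hs with rfl | ⟨hs, rfl⟩
  · exact h
  · simpa [lazyStack] using Reaches.repl (Φ := Φ') (σ := []) (unpack_mem_topDown ht hs)
      (by simpa [activeStack] using h)

theorem reaches_topDown_of_run {c d w} (r : M.Run c d w) (hd : d.2 = [])
    {Φ'} (hΦ : List.Forall₂ M.Encodes c.2 Φ') :
    M.topDown.Reaches (.sim c.1, Φ') (.sim d.1, []) w := by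
  induction r generalizing Φ' with
  | refl =>
    rw [hd, List.forall₂_nil_left_iff] at hΦ
    exact hΦ ▸ .refl _
  | repl Φ σ p X β a q Ψ Y β' Ψ' ht _ ih =>
    obtain ⟨Φ₀', y, rfl, h₀, hy⟩ := List.forall₂_append_singleton_left_iff.1 hΦ
    exact reaches_of_encodes ht hy <|
      (reaches_simulate_repl ht Φ₀' σ).trans (ih hd (forall₂_encodes_repl ht h₀ _))
  | popT Φ p X β a q ht _ ih =>
    obtain ⟨Φ₀', y, rfl, h₀, hy⟩ := List.forall₂_append_singleton_left_iff.1 hΦ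
    exact reaches_of_encodes ht hy <| (reaches_simulate_popT ht Φ₀').trans (ih hd h₀)

theorem reaches_initTrans :
    M.topDown.Reaches (.start, [(.start, [none])]) (.sim M.qInit, M.stackInit.map lazyStack)
      [] := by
  have hmem := M.initTrans_mem_topDown
  unfold initTrans at hmem
  split at hmem
  next hL =>
    rw [List.getLast?_eq_none_iff.1 hL]
    exact (Reaches.refl _).popT (Φ := []) hmem
  next s hL =>
    have h := (Reaches.refl _).repl (Φ := []) (σ := []) hmem
    simp only [List.nil_append, List.append_nil, Option.toList_none] at h
    rwa [map_lazyStack_eq_of_getLast? hL]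

end Forward

theorem language_topDown [One A] (hfin : M.stackFin = []) :
    M.topDown.language = M.language := by
  ext w
  constructor
  · intro h
    exact Reaches.backward_induction backwardClosed_topDown h (simInv_final hfin) rfl
  · rintro ⟨r⟩
    exact reaches_initTrans.trans (reaches_topDown_of_run r hfin
      (forall₂_encodes_map_lazyStack fun s hs => List.mem_append_left _ hs))

end WEPDA

end TopDown

/-- Every weighted embedded pushdown automaton is weakly equivalent to a
top-down WEPDA. -/
theorem every_wepda_weakly_equivalent_to_topDown
    {Q N T Γ A : Type} [Semiring A] (M : WEPDA Q N T Γ A) :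
    ∃ (Q' N' Γ' : Type) (M' : WEPDA Q' N' T Γ' A),
      M'.IsTopDown ∧ M'.language = M.language :=
  ⟨_, _, _, M.withEmptyFinal.topDown, WEPDA.topDown_isTopDown,
    by rw [WEPDA.language_topDown rfl, WEPDA.language_withEmptyFinal]⟩

end CtrlForm
end
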